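/- Let φ : ℝⁿ → [0,∞) be bounded and measurable, and suppose there exist α > 0, sequences z_k ∈ ℝⁿ and r_k → +∞ such that m(B(z_k, r_k) ∩ {y : φ(y) ≥ α}) ≥ (D − ε) ωₙ r_kⁿ for all k, where D > 0 and 0 < ε < D. Then for every T > 0, sup_{z ∈ ℝⁿ} ∫_{ℝⁿ} g(z,y,T) φ(y) dy ≥ α (D − ε) (1 − δ) for every δ ∈ (0,1); consequently sup_{z} ∫ g(z,y,T) φ(y) dy ≥ α(D − ε). -/

import Mathlib

open MeasureTheory Metric Set Filter Real
open Topology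

noncomputable def heatKernel (n : ℕ) (x y : EuclideanSpace ℝ (Fin n)) (t : ℝ) : ℝ :=
  (4 * Real.pi * t) ^ (-(n : ℝ) / 2) * Real.exp (-‖x - y‖ ^ 2 / (4 * t))

noncomputable def gaussF (n : ℕ) (T : ℝ) (x : EuclideanSpace ℝ (Fin n)) : ℝ :=
  (4 * Real.pi * T) ^ (-(n : ℝ) / 2) * Real.exp (-‖x‖ ^ 2 / (4 * T))

lemma gaussF_pos {n : ℕ} {T : ℝ} (hT : 0 < T) (x : EuclideanSpace ℝ (Fin n)) :
    0 < gaussF n T x := by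
  unfold gaussF
  have := Real.pi_pos
  positivity

lemma gaussF_continuous (n : ℕ) (T : ℝ) : Continuous (gaussF n T) := by
  unfold gaussF
  fun_prop

lemma integral_gaussF {n : ℕ} {T : ℝ} (hT : 0 < T) :
    ∫ x : EuclideanSpace ℝ (Fin n), gaussF n T x = 1 := by
  have hb : (0:ℝ) < 1 / (4 * T) := by positivity
  have h1 : ∀ x : EuclideanSpace ℝ (Fin n),
      gaussF n T x = (4 * Real.pi * T) ^ (-(n : ℝ) / 2)
        * Real.exp (-(1/(4*T)) * ‖x‖ ^ 2) := by
    intro x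
    unfold gaussF
    congr 1
    congr 1
    field_simp
  simp only [h1]
  rw [MeasureTheory.integral_const_mul, GaussianFourier.integral_rexp_neg_mul_sq_norm hb]
  rw [finrank_euclideanSpace_fin]
  have h2 : Real.pi / (1/(4*T)) = 4 * Real.pi * T := by
    field_simp
  rw [h2, ← Real.rpow_add (by positivity)]
  rw [show (-(n:ℝ)/2 + (n:ℝ)/2) = 0 by ring, Real.rpow_zero]

lemma integrable_gaussF {n : ℕ} {T : ℝ} (hT : 0 < T) :
    Integrable (gaussF n T) := by
  by_contra h
  have h1 := integral_gaussF (n := n) hT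
  rw [integral_undef h] at h1
  norm_num at h1

lemma lintegral_gaussF {n : ℕ} {T : ℝ} (hT : 0 < T) :
    ∫⁻ x : EuclideanSpace ℝ (Fin n), ENNReal.ofReal (gaussF n T x) = 1 := by
  rw [← ofReal_integral_eq_lintegral_ofReal (integrable_gaussF hT)
    (Eventually.of_forall fun x => (gaussF_pos hT x).le), integral_gaussF hT,
    ENNReal.ofReal_one]

lemma lintegral_ball_translate {n : ℕ} {T : ℝ} (y : EuclideanSpace ℝ (Fin n)) (ρ : ℝ) :
    ∫⁻ x in ball y ρ, ENNReal.ofReal (gaussF n T (x - y)) =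
      ∫⁻ x in ball (0 : EuclideanSpace ℝ (Fin n)) ρ, ENNReal.ofReal (gaussF n T x) := by
  rw [← lintegral_indicator measurableSet_ball, ← lintegral_indicator measurableSet_ball]
  have h : ∀ x, (ball y ρ).indicator (fun x => ENNReal.ofReal (gaussF n T (x - y))) x
      = (ball (0 : EuclideanSpace ℝ (Fin n)) ρ).indicator
          (fun x => ENNReal.ofReal (gaussF n T x)) (x - y) := by
    intro x
    by_cases hx : x ∈ ball y ρ
    · rw [indicator_of_mem hx, indicator_of_mem (by
        simpa [mem_ball, dist_eq_norm] using hx)]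
    · rw [indicator_of_notMem hx, indicator_of_notMem (by
        simpa [mem_ball, dist_eq_norm] using hx)]
  simp only [h]
  exact lintegral_sub_right_eq_self
    ((ball (0 : EuclideanSpace ℝ (Fin n)) ρ).indicator fun x => ENNReal.ofReal (gaussF n T x)) y

theorem heat_semigroup_sup_lower_bound {n : ℕ}
    (φ : EuclideanSpace ℝ (Fin n) → ℝ) (hφm : Measurable φ)
    (hφ0 : ∀ x, 0 ≤ φ x) (M : ℝ) (hφM : ∀ x, φ x ≤ M)
    (α D ε : ℝ) (hα : 0 < α) (hD : 0 < D) (hε : 0 < ε) (hεD : ε < D)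
    (z : ℕ → EuclideanSpace ℝ (Fin n)) (r : ℕ → ℝ) (hrpos : ∀ k, 0 < r k)
    (hr : Tendsto r atTop atTop)
    (hdens : ∀ k, ENNReal.ofReal
        ((D - ε) * (volume (ball (0 : EuclideanSpace ℝ (Fin n)) 1)).toReal * r k ^ n)
      ≤ volume (ball (z k) (r k) ∩ {y | α ≤ φ y})) :
    ∀ T > (0:ℝ),
      (∀ δ ∈ Ioo (0:ℝ) 1, ∃ zc : EuclideanSpace ℝ (Fin n),
        α * (D - ε) * (1 - δ) ≤ ∫ y, heatKernel n zc y T * φ y) ∧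
      α * (D - ε) ≤ ⨆ zc : EuclideanSpace ℝ (Fin n), ∫ y, heatKernel n zc y T * φ y := by
  intro T hT
  have hβ : 0 < D - ε := sub_pos.mpr hεD
  have hωpos : (0:ℝ) < (volume (ball (0 : EuclideanSpace ℝ (Fin n)) 1)).toReal :=
    ENNReal.toReal_pos (measure_ball_pos _ _ one_pos).ne' measure_ball_lt_top.ne
  set ω := (volume (ball (0 : EuclideanSpace ℝ (Fin n)) 1)).toReal with hω
  have hker : ∀ zc y : EuclideanSpace ℝ (Fin n),
      heatKernel n zc y T = gaussF n T (zc - y) := fun _ _ => rfl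
  have hM0 : (0:ℝ) ≤ M := le_trans (hφ0 0) (hφM 0)
  have hint : ∀ zc : EuclideanSpace ℝ (Fin n),
      Integrable (fun y => gaussF n T (zc - y)) :=
    fun zc => (integrable_gaussF hT).comp_sub_left zc
  have hφnorm : ∀ y, ‖φ y‖ ≤ M := fun y => by
    rw [Real.norm_eq_abs, abs_of_nonneg (hφ0 y)]; exact hφM y
  have hintφ : ∀ zc : EuclideanSpace ℝ (Fin n),
      Integrable (fun y => gaussF n T (zc - y) * φ y) := by
    intro zc
    have := (hint zc).bdd_mul hφm.aestronglyMeasurable (Eventually.of_forall hφnorm)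
    simpa [mul_comm] using this
  have hEmeas : MeasurableSet {y : EuclideanSpace ℝ (Fin n) | α ≤ φ y} :=
    measurableSet_le measurable_const hφm
  have hgmeas : Measurable fun p : EuclideanSpace ℝ (Fin n) × EuclideanSpace ℝ (Fin n) =>
      ENNReal.ofReal (gaussF n T (p.1 - p.2)) :=
    ((gaussF_continuous n T).comp (continuous_fst.sub continuous_snd)).measurable.ennreal_ofReal
  -- the key claim
  have key : ∀ δ ∈ Ioo (0:ℝ) 1, ∃ zc : EuclideanSpace ℝ (Fin n),
      α * (D - ε) * (1 - δ) ≤ ∫ y, heatKernel n zc y T * φ y := by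
    rintro δ ⟨hδ0, hδ1⟩
    -- choose R
    have hcov : ⋃ m : ℕ, ball (0 : EuclideanSpace ℝ (Fin n)) (m:ℝ) = univ := by
      ext x
      simp only [mem_iUnion, mem_ball, dist_zero_right, mem_univ, iff_true]
      obtain ⟨m, hm⟩ := exists_nat_gt ‖x‖
      exact ⟨m, hm⟩
    have hmono : Monotone fun m : ℕ => ball (0 : EuclideanSpace ℝ (Fin n)) (m:ℝ) :=
      fun a b hab => ball_subset_ball (by exact_mod_cast hab)
    set ν : Measure (EuclideanSpace ℝ (Fin n)) :=
      volume.withDensity (fun x => ENNReal.ofReal (gaussF n T x)) with hν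
    have hν_univ : ν univ = 1 := by
      rw [hν, withDensity_apply _ MeasurableSet.univ, Measure.restrict_univ,
        lintegral_gaussF hT]
    have htend := tendsto_measure_iUnion_atTop (μ := ν) hmono
    rw [hcov, hν_univ] at htend
    have hlt1 : ENNReal.ofReal (1 - δ/2) < 1 := by
      rw [ENNReal.ofReal_lt_one]; linarith
    obtain ⟨R, hR⟩ := (htend.eventually (eventually_gt_nhds hlt1)).exists
    have hR' : ENNReal.ofReal (1 - δ/2)
        < ∫⁻ x in ball (0 : EuclideanSpace ℝ (Fin n)) (R:ℝ), ENNReal.ofReal (gaussF n T x) := by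
      rw [← withDensity_apply _ measurableSet_ball]
      exact hR
    -- choose k
    have hRnn : (0:ℝ) ≤ (R:ℝ) := Nat.cast_nonneg R
    have hratio : Tendsto (fun k => (r k / (r k + R))^n) atTop (𝓝 1) := by
      have h0 : Tendsto (fun k => (R:ℝ) / r k) atTop (𝓝 0) :=
        Tendsto.div_atTop tendsto_const_nhds hr
      have h1 : Tendsto (fun k => 1 / (1 + (R:ℝ) / r k)) atTop (𝓝 1) := by
        have ht : Tendsto (fun x : ℝ => 1 / (1 + x)) (𝓝 0) (𝓝 1) := by
          have hden : Tendsto (fun x : ℝ => 1 + x) (𝓝 0) (𝓝 1) := by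
            simpa using (tendsto_const_nhds (x := (1:ℝ))).add (tendsto_id (x := 𝓝 (0:ℝ)))
          simpa [one_div] using hden.inv₀ one_ne_zero
        exact ht.comp h0
      have h2 : Tendsto (fun k => r k / (r k + R)) atTop (𝓝 1) := by
        refine h1.congr fun k => ?_
        have hk := hrpos k
        have hk2 : 0 < r k + R := by linarith
        field_simp
      simpa using h2.pow n
    have hθ : (1 - δ) / (1 - δ/2) < 1 := by
      rw [div_lt_one (by linarith)]; linarith
    obtain ⟨k, hk⟩ := (hratio.eventually (eventually_gt_nhds hθ)).exists
    have hrk := hrpos k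
    have hrkR : (0:ℝ) < r k + R := by linarith
    have hkey : (1 - δ) * (r k + R)^n < (1 - δ/2) * r k ^ n := by
      have h3 : 1 - δ < (r k / (r k + R))^n * (1 - δ/2) :=
        (div_lt_iff₀ (by linarith)).mp hk
      have h4 : (1 - δ) * (r k + R)^n < ((r k / (r k + R))^n * (1 - δ/2)) * (r k + R)^n :=
        mul_lt_mul_of_pos_right h3 (by positivity)
      calc (1 - δ) * (r k + R)^n < ((r k / (r k + R))^n * (1 - δ/2)) * (r k + R)^n := h4
        _ = (1 - δ/2) * r k ^ n := by
            rw [div_pow]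
            field_simp
    -- pigeonhole
    set A : Set (EuclideanSpace ℝ (Fin n)) :=
      ball (z k) (r k) ∩ {y | α ≤ φ y} with hA
    have hAmeas : MeasurableSet A := measurableSet_ball.inter hEmeas
    have hvolA : ENNReal.ofReal ((D - ε) * ω * r k ^ n) ≤ volume A := hdens k
    set S : Set (EuclideanSpace ℝ (Fin n)) := ball (z k) (r k + R) with hS
    have hvolS : volume S = ENNReal.ofReal ((r k + R)^n)
        * volume (ball (0 : EuclideanSpace ℝ (Fin n)) 1) := by
      rw [hS, Measure.addHaar_ball_of_pos _ _ hrkR, finrank_euclideanSpace_fin]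
    have claim : ∃ zc : EuclideanSpace ℝ (Fin n), ENNReal.ofReal ((D - ε) * (1 - δ))
        ≤ ∫⁻ y in A, ENNReal.ofReal (gaussF n T (zc - y)) := by
      by_contra hcon
      push_neg at hcon
      have hupper : ∫⁻ zc in S, ∫⁻ y in A, ENNReal.ofReal (gaussF n T (zc - y))
          ≤ ENNReal.ofReal ((D - ε) * (1 - δ)) * volume S := by
        calc ∫⁻ zc in S, ∫⁻ y in A, ENNReal.ofReal (gaussF n T (zc - y))
            ≤ ∫⁻ _ in S, ENNReal.ofReal ((D - ε) * (1 - δ)) :=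
              lintegral_mono fun zc => (hcon zc).le
          _ = ENNReal.ofReal ((D - ε) * (1 - δ)) * volume S := setLIntegral_const _ _
      have hswap : ∫⁻ zc in S, ∫⁻ y in A, ENNReal.ofReal (gaussF n T (zc - y))
          = ∫⁻ y in A, ∫⁻ zc in S, ENNReal.ofReal (gaussF n T (zc - y)) :=
        lintegral_lintegral_swap hgmeas.aemeasurable
      have hinner : ∀ y ∈ A, ENNReal.ofReal (1 - δ/2)
          ≤ ∫⁻ zc in S, ENNReal.ofReal (gaussF n T (zc - y)) := by
        intro y hy
        have hsub : ball y (R:ℝ) ⊆ S := by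
          intro w hw
          rw [hS, mem_ball]
          have h1 : dist w y < R := mem_ball.mp hw
          have h2 : dist y (z k) < r k := mem_ball.mp hy.1
          calc dist w (z k) ≤ dist w y + dist y (z k) := dist_triangle _ _ _
            _ < R + r k := by linarith
            _ = r k + R := by ring
        calc ENNReal.ofReal (1 - δ/2)
            ≤ ∫⁻ x in ball (0 : EuclideanSpace ℝ (Fin n)) (R:ℝ),
                ENNReal.ofReal (gaussF n T x) := hR'.le
          _ = ∫⁻ zc in ball y (R:ℝ), ENNReal.ofReal (gaussF n T (zc - y)) :=
              (lintegral_ball_translate y (R:ℝ)).symm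
          _ ≤ ∫⁻ zc in S, ENNReal.ofReal (gaussF n T (zc - y)) :=
              lintegral_mono_set hsub
      have hlower : ENNReal.ofReal (1 - δ/2) * ENNReal.ofReal ((D - ε) * ω * r k ^ n)
          ≤ ∫⁻ zc in S, ∫⁻ y in A, ENNReal.ofReal (gaussF n T (zc - y)) := by
        rw [hswap]
        calc ENNReal.ofReal (1 - δ/2) * ENNReal.ofReal ((D - ε) * ω * r k ^ n)
            ≤ ENNReal.ofReal (1 - δ/2) * volume A := mul_le_mul_right hvolA _
          _ = ∫⁻ _ in A, ENNReal.ofReal (1 - δ/2) := (setLIntegral_const _ _).symm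
          _ ≤ ∫⁻ y in A, ∫⁻ zc in S, ENNReal.ofReal (gaussF n T (zc - y)) :=
              setLIntegral_mono' hAmeas hinner
      have hcomb := le_trans hlower hupper
      rw [hvolS, show volume (ball (0 : EuclideanSpace ℝ (Fin n)) 1)
          = ENNReal.ofReal ω from (ENNReal.ofReal_toReal measure_ball_lt_top.ne).symm,
        ← ENNReal.ofReal_mul (by linarith : (0:ℝ) ≤ 1 - δ/2),
        ← ENNReal.ofReal_mul (le_of_lt (pow_pos hrkR n)),
        ← ENNReal.ofReal_mul (by nlinarith : (0:ℝ) ≤ (D - ε) * (1 - δ))] at hcomb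
      rw [ENNReal.ofReal_le_ofReal_iff (mul_nonneg (by nlinarith)
        (mul_nonneg (pow_pos hrkR n).le hωpos.le))] at hcomb
      nlinarith [mul_lt_mul_of_pos_left hkey (mul_pos hβ hωpos)]
    obtain ⟨zc, hzc⟩ := claim
    refine ⟨zc, ?_⟩
    have hLne : (∫⁻ y in A, ENNReal.ofReal (gaussF n T (zc - y))) ≠ ⊤ := by
      have h1 : ∫⁻ y in A, ENNReal.ofReal (gaussF n T (zc - y))
          ≤ ∫⁻ y, ENNReal.ofReal (gaussF n T (zc - y)) := setLIntegral_le_lintegral _ _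
      have h2 : ∫⁻ y, ENNReal.ofReal (gaussF n T (zc - y))
          ≤ ∫⁻ y, (‖gaussF n T (zc - y)‖₊ : ENNReal) :=
        lintegral_mono fun y => Real.ofReal_le_enorm _
      exact ((h1.trans h2).trans_lt (hint zc).2).ne
    have hL : (D - ε) * (1 - δ) ≤ (∫⁻ y in A, ENNReal.ofReal (gaussF n T (zc - y))).toReal := by
      have := ENNReal.toReal_mono hLne hzc
      rwa [ENNReal.toReal_ofReal (by nlinarith)] at this
    have heq : ∫ y in A, gaussF n T (zc - y)
        = (∫⁻ y in A, ENNReal.ofReal (gaussF n T (zc - y))).toReal := by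
      rw [integral_eq_lintegral_of_nonneg_ae
        (Eventually.of_forall fun y => (gaussF_pos hT _).le)
        ((hint zc).aestronglyMeasurable.restrict)]
    simp only [hker]
    calc α * (D - ε) * (1 - δ) = α * ((D - ε) * (1 - δ)) := by ring
      _ ≤ α * (∫⁻ y in A, ENNReal.ofReal (gaussF n T (zc - y))).toReal :=
          mul_le_mul_of_nonneg_left hL hα.le
      _ = α * ∫ y in A, gaussF n T (zc - y) := by rw [heq]
      _ = ∫ y in A, gaussF n T (zc - y) * α := by
          rw [MeasureTheory.integral_mul_const]; ring
      _ ≤ ∫ y in A, gaussF n T (zc - y) * φ y := by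
          refine setIntegral_mono_on ((hint zc).mul_const α).integrableOn
            (hintφ zc).integrableOn hAmeas fun y hy => ?_
          exact mul_le_mul_of_nonneg_left hy.2 (gaussF_pos hT _).le
      _ ≤ ∫ y, gaussF n T (zc - y) * φ y :=
          setIntegral_le_integral (hintφ zc)
            (Eventually.of_forall fun y => mul_nonneg (gaussF_pos hT _).le (hφ0 y))
  -- conclusion
  have hbdd : BddAbove (range fun zc : EuclideanSpace ℝ (Fin n) =>
      ∫ y, heatKernel n zc y T * φ y) := by
    refine ⟨M, ?_⟩
    rintro - ⟨zc, rfl⟩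
    simp only [hker]
    calc ∫ y, gaussF n T (zc - y) * φ y ≤ ∫ y, gaussF n T (zc - y) * M :=
          integral_mono (hintφ zc) ((hint zc).mul_const M)
            (fun y => mul_le_mul_of_nonneg_left (hφM y) (gaussF_pos hT _).le)
      _ = (∫ y, gaussF n T (zc - y)) * M := MeasureTheory.integral_mul_const _ _
      _ = 1 * M := by rw [integral_sub_left_eq_self (gaussF n T) volume zc, integral_gaussF hT]
      _ = M := one_mul M
  refine ⟨key, ?_⟩
  have hlim : Tendsto (fun m : ℕ => α * (D - ε) * (1 - 1/((m:ℝ)+2))) atTop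
      (𝓝 (α * (D - ε))) := by
    have h0 : Tendsto (fun m : ℕ => 1/((m:ℝ)+2)) atTop (𝓝 0) :=
      Tendsto.div_atTop tendsto_const_nhds
        (tendsto_atTop_add_const_right atTop 2 tendsto_natCast_atTop_atTop)
    have h1 : Tendsto (fun m : ℕ => (1:ℝ) - 1/((m:ℝ)+2)) atTop (𝓝 1) := by
      simpa using (tendsto_const_nhds (x := (1:ℝ))).sub h0
    have := h1.const_mul (α * (D - ε))
    simpa [mul_comm] using this
  refine le_of_tendsto hlim (Eventually.of_forall fun m => ?_)
  have hm2 : (0:ℝ) < (m:ℝ) + 2 := by positivity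
  obtain ⟨zc, hzc⟩ := key (1/((m:ℝ)+2)) ⟨by positivity, by
    rw [div_lt_one hm2]; linarith [Nat.cast_nonneg (α := ℝ) m]⟩
  exact hzc.trans (le_ciSup hbdd zc)
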